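/- arXiv:2312.05004 — 3 statements merged into one kernel-verified Lean document; each statement's English description precedes it below -/
import Mathlib

section
/- Let n ≥ 2, let D be a topological space containing a closed subset Y with a continuous bijection F : Y → S^{n-1}, and let G : D → ℝ^n be a continuous extension of F with ‖G(x)‖ < 1 for x ∉ Y. Then the set of continuous functions on D attaining their maximum at exactly one point is n-lineable; i.e., there is an n-dimensional subspace of C(D, ℝ) all of whose nonzero elements attain their maximum at exactly one point. -/
/-!
For `a ≠ 0` the linear functional `v ↦ ⟪v, a⟫` attains its maximum `‖a‖` on the closed unit
ball exactly at the unit vector `‖a‖⁻¹ • a`. Since `G` maps `D` into the closed unit ball and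
hits every unit vector exactly once, `x ↦ ⟪G x, a⟫` has exactly one maximum point. These
functions form the image of `ℝⁿ` under an injective linear map `ℝⁿ → C(D, ℝ)`.
-/

open RealInnerProductSpace

section InnerProductSpace

variable {E : Type*} [NormedAddCommGroup E] [InnerProductSpace ℝ E]

theorem real_inner_le_norm_of_norm_le_one {v : E} (hv : ‖v‖ ≤ 1) (a : E) : ⟪v, a⟫ ≤ ‖a‖ :=
  calc ⟪v, a⟫ ≤ ‖v‖ * ‖a‖ := real_inner_le_norm v a
    _ ≤ ‖a‖ := mul_le_of_le_one_left (norm_nonneg a) hv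

theorem real_inner_inv_norm_smul_self (a : E) : ⟪‖a‖⁻¹ • a, a⟫ = ‖a‖ := by
  rcases eq_or_ne a 0 with rfl | ha
  · simp
  rw [real_inner_smul_left, real_inner_self_eq_norm_mul_norm,
    inv_mul_cancel_left₀ (norm_ne_zero_iff.mpr ha)]

theorem norm_inv_norm_smul_self {a : E} (ha : a ≠ 0) : ‖‖a‖⁻¹ • a‖ = 1 := by
  rw [norm_smul, norm_inv, norm_norm, inv_mul_cancel₀ (norm_ne_zero_iff.mpr ha)]

theorem eq_inv_norm_smul_of_norm_le_real_inner {v a : E} (hv : ‖v‖ ≤ 1) (ha : a ≠ 0)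
    (h : ‖a‖ ≤ ⟪v, a⟫) : v = ‖a‖⁻¹ • a := by
  have ha' : 0 < ‖a‖ := norm_pos_iff.mpr ha
  have hcs := real_inner_le_norm v a
  have hv1 : ‖v‖ = 1 := le_antisymm hv (by nlinarith)
  have heq : ⟪v, a⟫ = ‖v‖ * ‖a‖ := le_antisymm hcs (by rwa [hv1, one_mul])
  rw [inner_eq_norm_mul_iff_real, hv1, one_smul] at heq
  rw [eq_inv_smul_iff₀ ha'.ne']
  exact heq

end InnerProductSpace

section MaxPoints

variable {D E : Type*} [TopologicalSpace D] [NormedAddCommGroup E] [InnerProductSpace ℝ E]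

def ContinuousMap.innerRightₗ (G : C(D, E)) : E →ₗ[ℝ] C(D, ℝ) where
  toFun a := ⟨fun x => ⟪G x, a⟫, G.continuous.inner continuous_const⟩
  map_add' a b := by ext x; simp [inner_add_right]
  map_smul' c a := by ext x; simp [inner_smul_right]

@[simp]
theorem ContinuousMap.innerRightₗ_apply (G : C(D, E)) (a : E) (x : D) :
    G.innerRightₗ a x = ⟪G x, a⟫ :=
  rfl

variable {G : C(D, E)}

theorem ContinuousMap.innerRightₗ_injective
    (hsurj : ∀ u : E, ‖u‖ = 1 → ∃ p, G p = u) : Function.Injective G.innerRightₗ := by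
  rw [injective_iff_map_eq_zero]
  intro a h
  by_contra ha
  obtain ⟨p, hp⟩ := hsurj _ (norm_inv_norm_smul_self ha)
  have hval := DFunLike.congr_fun h p
  rw [innerRightₗ_apply, hp, real_inner_inv_norm_smul_self, ContinuousMap.zero_apply] at hval
  exact ha (norm_eq_zero.mp hval)

theorem ContinuousMap.existsUnique_forall_innerRightₗ_le (hG : ∀ x, ‖G x‖ ≤ 1)
    (hsphere : ∀ u : E, ‖u‖ = 1 → ∃! p, G p = u) {a : E} (ha : a ≠ 0) :
    ∃! p, ∀ x, G.innerRightₗ a x ≤ G.innerRightₗ a p := by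
  obtain ⟨p, hp, hp_unique⟩ := hsphere _ (norm_inv_norm_smul_self ha)
  have hmax : G.innerRightₗ a p = ‖a‖ := by
    rw [innerRightₗ_apply, hp, real_inner_inv_norm_smul_self]
  refine ⟨p, fun x => hmax ▸ real_inner_le_norm_of_norm_le_one (hG x) a, fun q hq => ?_⟩
  exact hp_unique q (eq_inv_norm_smul_of_norm_le_real_inner (hG q) ha (hmax ▸ hq p))

theorem exists_submodule_finrank_eq_existsUnique_isMax [FiniteDimensional ℝ E]
    (hG : ∀ x, ‖G x‖ ≤ 1) (hsphere : ∀ u : E, ‖u‖ = 1 → ∃! p, G p = u) :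
    ∃ V : Submodule ℝ C(D, ℝ), Module.finrank ℝ V = Module.finrank ℝ E ∧
      ∀ f ∈ V, f ≠ 0 → ∃! p, ∀ x, f x ≤ f p := by
  have hinj := G.innerRightₗ_injective fun u hu => (hsphere u hu).exists
  refine ⟨LinearMap.range G.innerRightₗ, LinearMap.finrank_range_of_inj hinj, ?_⟩
  rintro f ⟨a, rfl⟩ hf
  exact G.existsUnique_forall_innerRightₗ_le hG hsphere fun ha => hf (by rw [ha, map_zero])

end MaxPoints

theorem stmt_5_general (n : ℕ) (D : Type*) [TopologicalSpace D] (Y : Set D)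
    (F : Y → EuclideanSpace ℝ (Fin n))
    (hFs : ∀ y, ‖F y‖ = 1) (hFi : Function.Injective F)
    (hFsurj : ∀ z : EuclideanSpace ℝ (Fin n), ‖z‖ = 1 → ∃ y : Y, F y = z)
    (G : D → EuclideanSpace ℝ (Fin n)) (hGc : Continuous G)
    (hGF : ∀ y : Y, G y = F y) (hG1 : ∀ x : D, x ∉ Y → ‖G x‖ < 1) :
    ∃ V : Submodule ℝ C(D, ℝ), Module.finrank ℝ V = n ∧
      ∀ f : C(D, ℝ), f ∈ V → f ≠ 0 → ∃! p : D, ∀ x : D, f x ≤ f p := by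
  have hG : ∀ x, ‖G x‖ ≤ 1 := fun x => by
    by_cases hx : x ∈ Y
    · rw [hGF ⟨x, hx⟩, hFs]
    · exact (hG1 x hx).le
  have hmemY : ∀ x, ‖G x‖ = 1 → x ∈ Y := fun x hx => by
    by_contra hxY
    exact (hG1 x hxY).ne hx
  have hsphere : ∀ u, ‖u‖ = 1 → ∃! p, G p = u := fun u hu => by
    obtain ⟨y, rfl⟩ := hFsurj u hu
    refine ⟨y, hGF y, fun q hq => ?_⟩
    have hqY := hmemY q (hq ▸ hFs y)
    exact congrArg Subtype.val (hFi (show F ⟨q, hqY⟩ = F y from hGF ⟨q, hqY⟩ ▸ hq))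
  simpa using exists_submodule_finrank_eq_existsUnique_isMax (G := ⟨G, hGc⟩) hG hsphere

/-- Let `n ≥ 2`, `Y ⊆ D` closed, `F : Y → S^{n-1}` a continuous bijection, and `G : D → ℝⁿ`
a continuous extension of `F` with `‖G x‖ < 1` for `x ∉ Y`. Then the set of continuous
functions on `D` attaining their maximum at exactly one point is `n`-lineable: there is an
`n`-dimensional subspace of `C(D, ℝ)` all of whose nonzero elements attain their maximum at
exactly one point. -/
theorem stmt_5 (n : ℕ) (hn : 2 ≤ n) (D : Type*) [TopologicalSpace D] (Y : Set D)
    (hY : IsClosed Y) (F : Y → EuclideanSpace ℝ (Fin n)) (hFc : Continuous F)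
    (hFs : ∀ y, ‖F y‖ = 1) (hFi : Function.Injective F)
    (hFsurj : ∀ z : EuclideanSpace ℝ (Fin n), ‖z‖ = 1 → ∃ y : Y, F y = z)
    (G : D → EuclideanSpace ℝ (Fin n)) (hGc : Continuous G)
    (hGF : ∀ y : Y, G y = F y) (hG1 : ∀ x : D, x ∉ Y → ‖G x‖ < 1) :
    ∃ V : Submodule ℝ C(D, ℝ), Module.finrank ℝ V = n ∧
      ∀ f : C(D, ℝ), f ∈ V → f ≠ 0 → ∃! p : D, ∀ x : D, f x ≤ f p :=
  stmt_5_general n D Y F hFs hFi hFsurj G hGc hGF hG1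
end

section
/- There is no (n+1)-dimensional vector subspace V of C₀(ℝ^n) such that every nonzero function in V is alternating and attains its maximum at exactly one point. -/
open scoped ZeroAtInfty
open Filter Topology Metric

/-!
The maximum `M g = ⨆ x, g x` is continuous and positively homogeneous on `V`, and positive on
`V ∖ {0}` because every nonzero `g ∈ V` takes a positive value; by compactness of the unit sphere,
`M g ≥ m ‖g‖` for some `m > 0`. Being finite-dimensional, `V` vanishes at infinity uniformly:
`|g| ≤ (m / 2) ‖g‖` off some compact `K`. So every maximum point lies in `K`, restriction to `K`
is injective on `V`, and its image is an `(n + 1)`-dimensional subspace of `C(K)` whose nonzero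
elements have a unique maximum point, against the assumed bound `n`.
-/

theorem exists_pos_mul_norm_le_of_homogeneous {E : Type*} [NormedAddCommGroup E]
    [NormedSpace ℝ E] [ProperSpace E] {f : E → ℝ} (hf : Continuous f)
    (hsmul : ∀ c : ℝ, 0 ≤ c → ∀ v, f (c • v) = c * f v) (hpos : ∀ v, v ≠ 0 → 0 < f v) :
    ∃ m > 0, ∀ v, m * ‖v‖ ≤ f v := by
  have hf0 : f 0 = 0 := by simpa using hsmul 0 le_rfl 0
  rcases subsingleton_or_nontrivial E with hE | hE
  · exact ⟨1, one_pos, fun v => by simp [Subsingleton.elim v 0, hf0]⟩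
  obtain ⟨u, hu, hmin⟩ := (isCompact_sphere (0 : E) 1).exists_isMinOn
    (NormedSpace.sphere_nonempty.mpr zero_le_one) hf.continuousOn
  refine ⟨f u, hpos u (ne_zero_of_mem_unit_sphere ⟨u, hu⟩), fun v => ?_⟩
  rcases eq_or_ne v 0 with rfl | hv
  · simp [hf0]
  have hv' : 0 < ‖v‖ := norm_pos_iff.mpr hv
  have hunit : ‖v‖⁻¹ • v ∈ sphere (0 : E) 1 := by simp [norm_smul, hv'.ne']
  calc f u * ‖v‖ ≤ f (‖v‖⁻¹ • v) * ‖v‖ := mul_le_mul_of_nonneg_right (hmin hunit) hv'.le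
    _ = f v := by rw [hsmul _ (inv_nonneg.mpr hv'.le)]; field_simp

theorem existsUnique_isMax_subtype_of_mem {α β : Type*} [Preorder β] {f : α → β} {s : Set α}
    (hf : ∃! p, ∀ x, f x ≤ f p) (hs : ∀ p, (∀ x, f x ≤ f p) → p ∈ s) :
    ∃! p : s, ∀ x : s, f x ≤ f p := by
  obtain ⟨p, hp, huniq⟩ := hf
  exact ⟨⟨p, hs p hp⟩, fun x => hp x,
    fun q hq => Subtype.ext (huniq q fun x => (hp x).trans (hq ⟨p, hs p hp⟩))⟩

namespace ZeroAtInftyContinuousMap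

variable {X : Type*} [TopologicalSpace X]

theorem norm_apply_le {β : Type*} [SeminormedAddCommGroup β] (g : C₀(X, β)) (x : X) :
    ‖g x‖ ≤ ‖g‖ :=
  g.toBCF.norm_coe_le_norm x

theorem apply_le_iSup (g : C₀(X, ℝ)) (x : X) : g x ≤ ⨆ y, g y :=
  le_ciSup ⟨‖g‖, by rintro _ ⟨y, rfl⟩; exact (le_abs_self _).trans (g.norm_apply_le y)⟩ x

theorem iSup_smul_apply {c : ℝ} (hc : 0 ≤ c) (g : C₀(X, ℝ)) :
    ⨆ x, (c • g) x = c * ⨆ x, g x := by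
  simp only [coe_smul, Pi.smul_apply, smul_eq_mul, Real.mul_iSup_of_nonneg hc]

theorem lipschitzWith_iSup_apply : LipschitzWith 1 fun g : C₀(X, ℝ) => ⨆ x, g x := by
  refine LipschitzWith.of_le_add_mul 1 fun g h => ?_
  cases isEmpty_or_nonempty X
  · simp [Real.iSup_of_isEmpty]
  refine ciSup_le fun x => ?_
  have hx : g x - h x ≤ ‖g - h‖ := (le_abs_self _).trans ((g - h).norm_apply_le x)
  rw [NNReal.coe_one, one_mul, dist_eq_norm]
  linarith [h.apply_le_iSup x]

theorem exists_isCompact_forall_norm_apply_le {β : Type*} [NormedAddCommGroup β]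
    [NormedSpace ℝ β] (V : Submodule ℝ C₀(X, β)) [FiniteDimensional ℝ V] {ε : ℝ} (hε : 0 < ε) :
    ∃ K, IsCompact K ∧ ∀ g : V, ∀ x ∉ K, ‖(g : C₀(X, β)) x‖ ≤ ε * ‖g‖ := by
  let b := Module.finBasis ℝ V
  let C i := ‖LinearMap.toContinuousLinearMap (b.coord i)‖
  have hdecay : Tendsto (fun x => ∑ i, C i * ‖(b i : C₀(X, β)) x‖) (cocompact X) (𝓝 0) := by
    simpa using tendsto_finsetSum _ fun i _ => (zero_at_infty (b i : C₀(X, β))).norm.const_mul (C i)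
  obtain ⟨K, hK, hKsub⟩ := mem_cocompact.mp (hdecay.eventually (eventually_le_nhds hε))
  refine ⟨K, hK, fun g x hx => ?_⟩
  have hexpand : (g : C₀(X, β)) x = ∑ i, b.repr g i • (b i : C₀(X, β)) x := by
    let evalAt : V →+ β := ⟨⟨fun g => (g : C₀(X, β)) x, rfl⟩, fun _ _ => rfl⟩
    conv_lhs => rw [← b.sum_repr g]
    exact map_sum evalAt _ _
  calc ‖(g : C₀(X, β)) x‖ ≤ ∑ i, ‖b.repr g i‖ * ‖(b i : C₀(X, β)) x‖ := by
        rw [hexpand]; exact (norm_sum_le _ _).trans_eq (by simp only [norm_smul])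
    _ ≤ ∑ i, C i * ‖g‖ * ‖(b i : C₀(X, β)) x‖ := by
        gcongr with i
        exact (LinearMap.toContinuousLinearMap (b.coord i)).le_opNorm g
    _ = (∑ i, C i * ‖(b i : C₀(X, β)) x‖) * ‖g‖ := by
        rw [Finset.sum_mul]; exact Finset.sum_congr rfl fun i _ => by ring
    _ ≤ ε * ‖g‖ := mul_le_mul_of_nonneg_right (hKsub hx) (norm_nonneg g)

theorem exists_isCompact_forall_isMaxPoint_mem (V : Submodule ℝ C₀(X, ℝ))
    [FiniteDimensional ℝ V] (hpos : ∀ g : V, g ≠ 0 → ∃ x, 0 < (g : C₀(X, ℝ)) x) :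
    ∃ K, IsCompact K ∧
      ∀ g : V, g ≠ 0 → ∀ p, (∀ x, (g : C₀(X, ℝ)) x ≤ (g : C₀(X, ℝ)) p) → p ∈ K := by
  obtain ⟨m, hm, hmle⟩ := exists_pos_mul_norm_le_of_homogeneous
    (f := fun g : V => ⨆ x, (g : C₀(X, ℝ)) x)
    (lipschitzWith_iSup_apply.continuous.comp continuous_subtype_val)
    (fun c hc g => by rw [Submodule.coe_smul]; exact iSup_smul_apply hc _)
    (fun g hg => (hpos g hg).elim fun x hx => hx.trans_le (apply_le_iSup _ x))
  obtain ⟨K, hK, hsmall⟩ := exists_isCompact_forall_norm_apply_le V (half_pos hm)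
  refine ⟨K, hK, fun g hg p hp => by_contra fun hpK => ?_⟩
  have : Nonempty X := ⟨p⟩
  have hg' : 0 < ‖g‖ := by simpa using hg
  refine lt_irrefl ((g : C₀(X, ℝ)) p) ?_
  calc (g : C₀(X, ℝ)) p ≤ ‖(g : C₀(X, ℝ)) p‖ := Real.le_norm_self _
    _ ≤ m / 2 * ‖g‖ := hsmall g p hpK
    _ < m * ‖g‖ := mul_lt_mul_of_pos_right (half_lt_self hm) hg'
    _ ≤ ⨆ x, (g : C₀(X, ℝ)) x := hmle g
    _ ≤ (g : C₀(X, ℝ)) p := ciSup_le hp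

def restrictₗ (K : Set X) : C₀(X, ℝ) →ₗ[ℝ] C(K, ℝ) where
  toFun g := (g : C(X, ℝ)).restrict K
  map_add' _ _ := rfl
  map_smul' _ _ := by ext; rfl

end ZeroAtInftyContinuousMap

open ZeroAtInftyContinuousMap in
/-- Assuming the theorem that for every compact `K ⊆ ℝⁿ`, any subspace of `C(K)` all of whose
nonzero elements attain their maximum at exactly one point has dimension at most `n`, there is
no `(n+1)`-dimensional subspace `V` of `C₀(ℝⁿ)` such that every nonzero function in `V` is
alternating and attains its maximum at exactly one point. -/
theorem stmt_13 (n : ℕ)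
    (hK : ∀ K : Set (EuclideanSpace ℝ (Fin n)), IsCompact K →
      ∀ V : Submodule ℝ C(K, ℝ),
        (∀ f : C(K, ℝ), f ∈ V → f ≠ 0 → ∃! p : K, ∀ x : K, f x ≤ f p) →
        Module.rank ℝ V ≤ n) :
    ¬ ∃ V : Submodule ℝ C₀(EuclideanSpace ℝ (Fin n), ℝ),
        Module.finrank ℝ V = n + 1 ∧
        ∀ g : C₀(EuclideanSpace ℝ (Fin n), ℝ), g ∈ V → g ≠ 0 →
          (∃ x y : EuclideanSpace ℝ (Fin n), g x < 0 ∧ 0 < g y) ∧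
          (∃! p : EuclideanSpace ℝ (Fin n), ∀ x, g x ≤ g p) := by
  rintro ⟨V, hdim, hV⟩
  have : FiniteDimensional ℝ V := .of_finrank_pos (by omega)
  have hV' (g : V) (hg : g ≠ 0) := hV g g.2 (by simpa using hg)
  obtain ⟨K, hKc, hmem⟩ := exists_isCompact_forall_isMaxPoint_mem V
    fun g hg => (hV' g hg).1.elim fun _ ⟨y, _, hy⟩ => ⟨y, hy⟩
  let L : V →ₗ[ℝ] C(K, ℝ) := (restrictₗ K).comp V.subtype
  have hLinj : Function.Injective L := by
    rw [injective_iff_map_eq_zero]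
    refine fun g hg0 => by_contra fun hg => ?_
    obtain ⟨⟨-, y, -, hy⟩, p, hp, -⟩ := hV' g hg
    have : (g : C₀(_, ℝ)) p = 0 := DFunLike.congr_fun hg0 ⟨p, hmem g hg p hp⟩
    linarith [hp y]
  have hmaxL : ∀ f ∈ LinearMap.range L, f ≠ 0 → ∃! p : K, ∀ x : K, f x ≤ f p := by
    rintro _ ⟨g, rfl⟩ hf
    have hg : g ≠ 0 := by rintro rfl; exact hf (map_zero L)
    exact existsUnique_isMax_subtype_of_mem (hV' g hg).2 (hmem g hg)
  have := hK K hKc _ hmaxL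
  rw [rank_range_of_injective L hLinj, ← Module.finrank_eq_rank, hdim] at this
  exact n.not_succ_le_self (Nat.cast_le.mp this)
end

section
/- Let n ≥ 2 and let A be any set. Every n-dimensional vector space V of functions f : A → ℝ contains an (n−1)-dimensional subspace W such that every nonzero g ∈ W is alternating, i.e., there exist x, y ∈ A with g(x) < 0 < g(y). -/
/-!
The nonnegative functions in `V` form a closed salient cone `C`. By Hahn–Banach each nonzero
`u ∈ C` has a functional that is nonnegative on `C` and positive at `u`; finitely many of these
cover the compact set of unit vectors of `C`, so their sum `φ` is positive on `C \ {0}`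
(if `C = {0}`, any nonzero `φ` will do). A nonzero element of the hyperplane
`ker φ` is then neither `≥ 0` nor `≤ 0`, i.e. it is alternating.
-/

open Module Set

theorem ProperCone.exists_strongDual_pos_of_salient {E : Type*} [NormedAddCommGroup E]
    [NormedSpace ℝ E] [FiniteDimensional ℝ E] (C : ProperCone ℝ E)
    (hC : ∀ x ∈ C, -x ∈ C → x = 0) :
    ∃ f : StrongDual ℝ E, ∀ x ∈ C, x ≠ 0 → 0 < f x := by
  have hsep (u : E) (hu : u ∈ C) (hu0 : u ≠ 0) :
      ∃ f : StrongDual ℝ E, (∀ x ∈ C, 0 ≤ f x) ∧ 0 < f u := by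
    obtain ⟨f, hfC, hfu⟩ := C.hyperplane_separation_point (x₀ := -u) fun h => hu0 (hC u hu h)
    exact ⟨f, hfC, by simpa using hfu⟩
  set S := Metric.sphere (0 : E) 1 ∩ C
  have hS : IsCompact S := (isCompact_sphere 0 1).inter_right C.isClosed
  choose F hFC hFpos using fun u : S => hsep u u.2.2 (ne_zero_of_mem_unit_sphere ⟨(u : E), u.2.1⟩)
  obtain ⟨t, ht⟩ := hS.elim_finite_subcover (fun u => {x | 0 < F u x})
    (fun u => isOpen_lt continuous_const (F u).continuous)
    (fun u hu => mem_iUnion.2 ⟨⟨u, hu⟩, hFpos ⟨u, hu⟩⟩)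
  refine ⟨∑ u ∈ t, F u, fun x hx hx0 => ?_⟩
  have hnx : 0 < ‖x‖ := norm_pos_iff.2 hx0
  have hxS : ‖x‖⁻¹ • x ∈ S :=
    ⟨by simp [norm_smul, hnx.ne'], C.smul_mem hx (inv_nonneg.2 hnx.le)⟩
  obtain ⟨u, hut, hux⟩ := mem_iUnion₂.1 (ht hxS)
  have : 0 < (∑ u ∈ t, F u) (‖x‖⁻¹ • x) := by
    rw [sum_apply]
    exact Finset.sum_pos' (fun u _ => hFC u _ hxS.2) ⟨u, hut, hux⟩
  rwa [map_smul, smul_eq_mul, mul_pos_iff_of_pos_left (inv_pos.2 hnx)] at this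

theorem exists_neg_and_pos_of_not_nonneg_of_not_nonpos {A β : Type*} [LinearOrder β] [Zero β]
    {g : A → β} (h₁ : ¬ 0 ≤ g) (h₂ : ¬ g ≤ 0) : ∃ x y, g x < 0 ∧ 0 < g y := by
  simp only [Pi.le_def, Pi.zero_apply, not_forall, not_le] at h₁ h₂
  obtain ⟨x, hx⟩ := h₁
  obtain ⟨y, hy⟩ := h₂
  exact ⟨x, y, hx, hy⟩

section OrderedSpace

variable {F : Type*} [AddCommGroup F] [PartialOrder F] [IsOrderedAddMonoid F] [Module ℝ F]
  [PosSMulMono ℝ F] [TopologicalSpace F] [OrderClosedTopology F] [IsTopologicalAddGroup F]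
  [ContinuousSMul ℝ F] (V : Submodule ℝ F) [FiniteDimensional ℝ V]

theorem Submodule.exists_dual_pos_of_nonneg :
    ∃ φ : Dual ℝ V, ∀ v : V, v ≠ 0 → 0 ≤ (v : F) → 0 < φ v := by
  let e := (finBasis ℝ V).equivFun
  let L : (Fin (finrank ℝ V) → ℝ) →L[ℝ] F :=
    LinearMap.toContinuousLinearMap (V.subtype ∘ₗ e.symm.toLinearMap)
  have hL : Function.Injective L := V.injective_subtype.comp e.symm.injective
  let C := (ProperCone.positive ℝ F).comap L
  obtain ⟨f, hf⟩ := C.exists_strongDual_pos_of_salient fun x hx hnx =>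
    hL <| (le_antisymm (by simpa [C] using hnx) (by simpa [C] using hx)).trans (map_zero L).symm
  exact ⟨f.toLinearMap ∘ₗ e.toLinearMap, fun v hv0 hv =>
    hf (e v) (by simpa [C, L] using hv) (by simpa using hv0)⟩

theorem Submodule.exists_dual_ne_zero_pos_of_nonneg [Nontrivial V] :
    ∃ φ : Dual ℝ V, φ ≠ 0 ∧ ∀ v : V, v ≠ 0 → 0 ≤ (v : F) → 0 < φ v := by
  obtain ⟨φ, hφ⟩ := V.exists_dual_pos_of_nonneg
  by_cases hpos : ∃ v : V, v ≠ 0 ∧ 0 ≤ (v : F)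
  · obtain ⟨v, hv0, hv⟩ := hpos
    exact ⟨φ, fun h => (hφ v hv0 hv).ne' (by simp [h]), hφ⟩
  · obtain ⟨ψ, hψ⟩ := exists_ne (0 : Dual ℝ V)
    exact ⟨ψ, hψ, fun v hv0 hv => (hpos ⟨v, hv0, hv⟩).elim⟩

end OrderedSpace

/-- Every `n`-dimensional space (`n ≥ 2`) of real-valued functions on a set `A` contains an
`(n-1)`-dimensional subspace every nonzero element of which is alternating. -/
theorem stmt_14 (n : ℕ) (hn : 2 ≤ n) (A : Type*) (V : Submodule ℝ (A → ℝ))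
    (hV : Module.finrank ℝ V = n) :
    ∃ W : Submodule ℝ (A → ℝ), W ≤ V ∧ Module.finrank ℝ W = n - 1 ∧
      ∀ g : A → ℝ, g ∈ W → g ≠ 0 → ∃ x y : A, g x < 0 ∧ 0 < g y := by
  have : FiniteDimensional ℝ V := Module.finite_of_finrank_pos (by omega)
  have : Nontrivial V := Module.nontrivial_of_finrank_pos (R := ℝ) (by omega)
  obtain ⟨φ, hφ0, hφ⟩ := V.exists_dual_ne_zero_pos_of_nonneg
  refine ⟨(LinearMap.ker φ).map V.subtype, Submodule.map_subtype_le _ _, ?_, ?_⟩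
  · have := Dual.finrank_ker_add_one_of_ne_zero hφ0
    rw [Submodule.finrank_map_subtype_eq]
    omega
  · rintro _ ⟨v, hv, rfl⟩ hg
    have hv0 : v ≠ 0 := by rintro rfl; exact hg rfl
    refine exists_neg_and_pos_of_not_nonneg_of_not_nonpos (fun h => (hφ v hv0 h).ne' hv) ?_
    intro h
    simpa [LinearMap.mem_ker.1 hv] using hφ (-v) (neg_ne_zero.2 hv0) (by simpa using h)
end
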